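/- In the C_n^{(1)} perfect crystal B of level l, with indices i_a = a-1 for 1 ≤ a ≤ n+1 and i_a = 2n+1-a for n+2 ≤ a ≤ 2n, the extremal elements defined by b_0 = (0,...,0) and b_a = f_{i_a}^{φ_{i_a}(b_{a-1})} b_{a-1} are: b_a = (0,...,0,2l,0,...,0) with 2l in position x_a for 1 ≤ a ≤ n, and b_{n+a} = (0,...,0,2l,0,...,0) with 2l in position \bar{x}_{n-a+1} for 1 ≤ a ≤ n. -/

import Mathlib

/- The perfect crystal B of level l for C_n^{(1)}:
   elements (x_1,…,x_n,x̄_n,…,x̄_1) with x_i, x̄_i ≥ 0,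
   Σ(x_i + x̄_i) ≤ 2l and Σ(x_i + x̄_i) even. -/
structure CElt where
  x : ℕ → ℤ
  xb : ℕ → ℤ

namespace CElt

def sumC (n : ℕ) (b : CElt) : ℤ := ∑ i ∈ Finset.Icc 1 n, (b.x i + b.xb i)

/-- membership in the level `l` perfect crystal `B` for `C_n^{(1)}` -/
def mem (n l : ℕ) (b : CElt) : Prop :=
  (∀ i, 0 ≤ b.x i) ∧ (∀ i, 0 ≤ b.xb i) ∧
  (∀ i, i = 0 ∨ n < i → b.x i = 0 ∧ b.xb i = 0) ∧
  sumC n b ≤ 2 * l ∧ Even (sumC n b)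

/-- the Kashiwara operator `f_0` (three cases) -/
def f0 (b : CElt) : CElt :=
  if b.xb 1 ≤ b.x 1 then ⟨Function.update b.x 1 (b.x 1 + 2), b.xb⟩
  else if b.x 1 = b.xb 1 - 1 then
    ⟨Function.update b.x 1 (b.x 1 + 1), Function.update b.xb 1 (b.xb 1 - 1)⟩
  else ⟨b.x, Function.update b.xb 1 (b.xb 1 - 2)⟩

/-- the Kashiwara operator `f_i`, `1 ≤ i ≤ n-1` -/
def fmid (i : ℕ) (b : CElt) : CElt :=
  if b.xb (i+1) ≤ b.x (i+1) then
    ⟨Function.update (Function.update b.x i (b.x i - 1)) (i+1) (b.x (i+1) + 1), b.xb⟩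
  else
    ⟨b.x, Function.update (Function.update b.xb (i+1) (b.xb (i+1) - 1)) i (b.xb i + 1)⟩

/-- the Kashiwara operator `f_n` -/
def flast (n : ℕ) (b : CElt) : CElt :=
  ⟨Function.update b.x n (b.x n - 1), Function.update b.xb n (b.xb n + 1)⟩

/-- the Kashiwara operator `f_i`, `0 ≤ i ≤ n` -/
def f (n i : ℕ) (b : CElt) : CElt :=
  if i = 0 then f0 b else if i = n then flast n b else fmid i b

/-- `φ_i(b)`; `f_i b` is defined exactly when `φ_i(b) > 0` -/
def phi (n l i : ℕ) (b : CElt) : ℤ :=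
  if i = 0 then (l : ℤ) - sumC n b / 2 + max (b.xb 1 - b.x 1) 0
  else if i = n then b.x n
  else b.x i + max (b.xb (i+1) - b.x (i+1)) 0

end CElt

namespace CElt

/-- the index sequence `i_a = a-1` for `1 ≤ a ≤ n+1`, `i_a = 2n+1-a` for
`n+2 ≤ a ≤ 2n` -/
def idx (n a : ℕ) : ℕ := if a ≤ n + 1 then a - 1 else 2 * n + 1 - a

/-- the ground-state element `(0,…,0)` -/
def bzero : CElt := ⟨fun _ => 0, fun _ => 0⟩

/-- element with `2l` in position `x_p`, zeros elsewhere -/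
def unitX (l p : ℕ) : CElt := ⟨fun i => if i = p then 2 * (l : ℤ) else 0, fun _ => 0⟩

/-- element with `2l` in position `x̄_p`, zeros elsewhere -/
def unitXb (l p : ℕ) : CElt := ⟨fun _ => 0, fun i => if i = p then 2 * (l : ℤ) else 0⟩

/-- the extremal elements `b_0 = (0,…,0)`, `b_a = f_{i_a}^{φ_{i_a}(b_{a-1})} b_{a-1}` -/
def bseq (n l : ℕ) : ℕ → CElt
  | 0 => bzero
  | a + 1 => (f n (idx n (a+1)))^[(phi n l (idx n (a+1)) (bseq n l a)).toNat] (bseq n l a)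

end CElt

/-!
Each `b_a` is the end of the `i_a`-string through `b_{a-1}`. From the ground state `f_0` acts
`l` times, each time adding `2` to `x_1`. For `0 < i < n`, `f_i` moves the mass `2l` from `x_i`
to `x_{i+1}` one unit at a time, `f_n` moves it from `x_n` to `x̄_n`, and on the way back `f_i`
moves it from `x̄_{i+1}` to `x̄_i`. In every case `φ_{i_a}(b_{a-1})` is exactly the length of
that string, so the iteration stops at the next element of the form `(0,…,0,2l,0,…,0)`.
-/

theorem Function.iterate_eq_of_map_eq_succ {α : Type*} {g : α → α} {s : ℕ → α} {m : ℕ}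
    (h : ∀ j < m, g (s j) = s (j + 1)) : ∀ k ≤ m, g^[k] (s 0) = s k
  | 0, _ => rfl
  | k + 1, hk => by
    rw [Function.iterate_succ_apply', iterate_eq_of_map_eq_succ h k (by omega), h k hk]

namespace CElt

@[ext] theorem ext {b c : CElt} (hx : b.x = c.x) (hxb : b.xb = c.xb) : b = c := by
  cases b; cases c; congr

def xString (l : ℤ) (i j : ℕ) : CElt :=
  ⟨fun k => if k = i + 1 then j else if k = i then 2 * l - j else 0, fun _ => 0⟩

def xbString (l : ℤ) (i j : ℕ) : CElt :=
  ⟨fun _ => 0, fun k => if k = i then j else if k = i + 1 then 2 * l - j else 0⟩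

def nString (l : ℤ) (n j : ℕ) : CElt :=
  ⟨fun k => if k = n then 2 * l - j else 0, fun k => if k = n then j else 0⟩

theorem f0_unitX_one (j : ℕ) : f0 (unitX j 1) = unitX (j + 1) 1 := by
  rw [f0, if_pos (by simp [unitX])]
  refine ext (funext fun k => ?_) rfl
  simp only [unitX, Function.update_apply]
  split_ifs <;> omega

theorem fmid_xString (l : ℤ) (i j : ℕ) : fmid i (xString l i j) = xString l i (j + 1) := by
  rw [fmid, if_pos (by simp [xString])]
  refine ext (funext fun k => ?_) rfl
  simp only [xString, Function.update_apply]
  split_ifs <;> omega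

theorem fmid_xbString (l : ℤ) (i : ℕ) {j : ℕ} (hj : j < 2 * l) :
    fmid i (xbString l i j) = xbString l i (j + 1) := by
  rw [fmid, if_neg (by simp [xbString]; omega)]
  refine ext rfl (funext fun k => ?_)
  simp only [xbString, Function.update_apply]
  split_ifs <;> omega

theorem flast_nString (l : ℤ) (n j : ℕ) : flast n (nString l n j) = nString l n (j + 1) := by
  ext k <;> simp only [flast, nString, Function.update_apply] <;> split_ifs <;> omega

theorem f0_iterate_bzero (l : ℕ) : f0^[l] bzero = unitX l 1 := by
  have hzero : bzero = unitX 0 1 := by ext k <;> simp [bzero, unitX]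
  rw [hzero]
  exact Function.iterate_eq_of_map_eq_succ (s := fun j => unitX j 1)
    (fun j _ => f0_unitX_one j) l le_rfl

theorem fmid_iterate_unitX (l i : ℕ) : (fmid i)^[2 * l] (unitX l i) = unitX l (i + 1) := by
  have hstart : unitX l i = xString l i 0 :=
    ext (funext fun k => by simp only [unitX, xString]; split_ifs <;> omega) rfl
  have hend : xString l i (2 * l) = unitX l (i + 1) :=
    ext (funext fun k => by simp only [unitX, xString]; split_ifs <;> omega) rfl
  rw [hstart, ← hend]
  exact Function.iterate_eq_of_map_eq_succ (fun j _ => fmid_xString l i j) _ le_rfl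

theorem fmid_iterate_unitXb (l i : ℕ) :
    (fmid i)^[2 * l] (unitXb l (i + 1)) = unitXb l i := by
  have hstart : unitXb l (i + 1) = xbString l i 0 :=
    ext rfl (funext fun k => by simp only [unitXb, xbString]; split_ifs <;> omega)
  have hend : xbString l i (2 * l) = unitXb l i :=
    ext rfl (funext fun k => by simp only [unitXb, xbString]; split_ifs <;> omega)
  rw [hstart, ← hend]
  exact Function.iterate_eq_of_map_eq_succ
    (fun j hj => fmid_xbString l i (j := j) (by omega)) _ le_rfl

theorem flast_iterate_unitX (l n : ℕ) : (flast n)^[2 * l] (unitX l n) = unitXb l n := by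
  have hstart : unitX l n = nString l n 0 := by
    ext k <;> simp only [unitX, nString] <;> split_ifs <;> omega
  have hend : nString l n (2 * l) = unitXb l n := by
    ext k <;> simp only [unitXb, nString] <;> split_ifs <;> omega
  rw [hstart, ← hend]
  exact Function.iterate_eq_of_map_eq_succ (fun j _ => flast_nString l n j) _ le_rfl

theorem f_zero (n : ℕ) : f n 0 = f0 := by
  funext b; simp [f]

theorem f_self {n : ℕ} (hn : n ≠ 0) : f n n = flast n := by
  funext b; simp [f, hn]

theorem f_of_lt {n i : ℕ} (hi : 0 < i) (hin : i < n) : f n i = fmid i := by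
  funext b; simp [f, hi.ne', hin.ne]

theorem phi_zero_bzero (n l : ℕ) : phi n l 0 bzero = l := by
  simp [phi, bzero, sumC]

theorem phi_unitX_of_lt {n i : ℕ} (l : ℕ) (hi : 0 < i) (hin : i < n) :
    phi n l i (unitX l i) = (2 * l : ℕ) := by
  simp [phi, unitX, hi.ne', hin.ne]

theorem phi_self_unitX {n : ℕ} (l : ℕ) (hn : n ≠ 0) : phi n l n (unitX l n) = (2 * l : ℕ) := by
  simp [phi, unitX, hn]

theorem phi_unitXb_of_lt {n i : ℕ} (l : ℕ) (hi : 0 < i) (hin : i < n) :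
    phi n l i (unitXb l (i + 1)) = (2 * l : ℕ) := by
  simp [phi, unitXb, hi.ne', hin.ne]

theorem idx_succ {n a : ℕ} (ha : a ≤ n) : idx n (a + 1) = a := by
  simp [idx, ha]

theorem idx_add_succ (n a : ℕ) : idx n (n + a + 1) = n - a := by
  unfold idx; split_ifs <;> omega

theorem bseq_succ_eq {n l a i k : ℕ} {g : CElt → CElt} {b : CElt} (hi : idx n (a + 1) = i)
    (hb : bseq n l a = b) (hg : f n i = g) (hk : phi n l i b = k) :
    bseq n l (a + 1) = g^[k] b := by
  rw [bseq, hi, hb, hg, hk, Int.toNat_natCast]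

theorem bseq_eq_unitX (n l : ℕ) {a : ℕ} (ha : 1 ≤ a) (han : a ≤ n) : bseq n l a = unitX l a := by
  induction a, ha using Nat.le_induction with
  | base =>
    rw [bseq_succ_eq (b := bzero) (idx_succ (Nat.zero_le n)) rfl (f_zero n) (phi_zero_bzero n l),
      f0_iterate_bzero]
  | succ a ha ih =>
    rw [bseq_succ_eq (idx_succ (by omega)) (ih (by omega)) (f_of_lt ha (by omega))
      (phi_unitX_of_lt l ha (by omega)), fmid_iterate_unitX]

theorem bseq_add_eq_unitXb (n l : ℕ) {a : ℕ} (ha : 1 ≤ a) (han : a ≤ n) :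
    bseq n l (n + a) = unitXb l (n - a + 1) := by
  induction a, ha using Nat.le_induction with
  | base =>
    have hn : n ≠ 0 := by omega
    rw [bseq_succ_eq (by simpa using idx_add_succ n 0) (bseq_eq_unitX n l (by omega) le_rfl)
      (f_self hn) (phi_self_unitX l hn), flast_iterate_unitX]
    congr; omega
  | succ a ha ih =>
    have hidx : n - (a + 1) + 1 = n - a := by omega
    have hi : 0 < n - a := by omega
    have hin : n - a < n := by omega
    rw [← add_assoc, bseq_succ_eq (idx_add_succ n a) (ih (by omega)) (f_of_lt hi hin)
      (phi_unitXb_of_lt l hi hin), fmid_iterate_unitXb, hidx]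

end CElt

theorem Cn1_extremal_elements_general (n l : ℕ) :
    (∀ a, 1 ≤ a → a ≤ n → CElt.bseq n l a = CElt.unitX l a) ∧
    (∀ a, 1 ≤ a → a ≤ n → CElt.bseq n l (n + a) = CElt.unitXb l (n - a + 1)) :=
  ⟨fun _ ↦ CElt.bseq_eq_unitX n l, fun _ ↦ CElt.bseq_add_eq_unitXb n l⟩

/-- in the `C_n^{(1)}` perfect crystal of level `l`, the extremal
elements are `b_a = (0,…,0,2l,0,…,0)` with `2l` in position `x_a` for
`1 ≤ a ≤ n`, and `b_{n+a} = (0,…,0,2l,0,…,0)` with `2l` in position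
`x̄_{n-a+1}` for `1 ≤ a ≤ n`. -/
theorem Cn1_extremal_elements (n l : ℕ) (hn : 2 ≤ n) (hl : 1 ≤ l) :
    (∀ a, 1 ≤ a → a ≤ n → CElt.bseq n l a = CElt.unitX l a) ∧
    (∀ a, 1 ≤ a → a ≤ n → CElt.bseq n l (n + a) = CElt.unitXb l (n - a + 1)) :=
  Cn1_extremal_elements_general n l
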